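/- arXiv:2312.17331 — 4 statements merged into one kernel-verified Lean document; each statement's English description precedes it below -/
import Mathlib

section
/- The set of affine doubly even-signed permutations is closed under composition and inverses, i.e., it forms a subgroup of the group of affine signed permutations. -/
def IsAffineSigned (n : ℤ) (π : Equiv.Perm ℤ) : Prop :=
  (∀ i : ℤ, π (i + 2 * n) = π i + 2 * n) ∧ (∀ i : ℤ, π (-i) = -π i)

/-- The set of positive integers sent to negative integers. -/
def negSet (π : Equiv.Perm ℤ) : Set ℤ := {i : ℤ | 0 < i ∧ π i < 0}

/-- The set of integers less than `n` sent to integers greater than `n`. -/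
def bigSet (n : ℤ) (π : Equiv.Perm ℤ) : Set ℤ := {i : ℤ | i < n ∧ n < π i}

/-- An affine doubly even-signed permutation: an affine signed permutation for which
both `#neg π` and `#big π` are (finite and) even. -/
def IsDoublyEvenSigned (n : ℤ) (π : Equiv.Perm ℤ) : Prop :=
  IsAffineSigned n π ∧ (negSet π).Finite ∧ (bigSet n π).Finite ∧
    Even (negSet π).ncard ∧ Even (bigSet n π).ncard


/-!
For an odd permutation `σ` of `ℤ`, `neg (π * σ)` is the symmetric difference of `neg σ` with
`{i > 0 | |σ i| ∈ neg π}`, and `i ↦ |σ i|` maps the latter bijectively onto `neg π`; hence the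
parity of `#neg` is multiplicative on odd permutations, and also `#neg π⁻¹ = #neg π`.
For an affine signed `π`, the reflection `i ↦ n - i` carries `neg` of the conjugate
`i ↦ π (i + n) - n` onto `big π`, and that conjugate is again odd, so `#big` is handled the same
way.
-/

open scoped symmDiff

def IsEvenFinite {α : Type*} (S : Set α) : Prop := S.Finite ∧ Even S.ncard

namespace IsEvenFinite

variable {α β : Type*} {A B : Set α}

theorem symmDiff (hA : IsEvenFinite A) (hB : IsEvenFinite B) : IsEvenFinite (A ∆ B) := by
  have hfin : (A ∆ B).Finite := (hA.1.union hB.1).subset symmDiff_le_sup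
  have hunion : (A ∆ B).ncard + (A ∩ B).ncard = (A ∪ B).ncard := by
    rw [symmDiff_eq_sup_sdiff_inf]
    exact Set.ncard_sdiff_add_ncard_of_subset
      (Set.inter_subset_left.trans Set.subset_union_left) (hA.1.union hB.1)
  have hinter := Set.ncard_union_add_ncard_inter A B hA.1 hB.1
  have key : Even ((A ∆ B).ncard + 2 * (A ∩ B).ncard) := by
    rw [show (A ∆ B).ncard + 2 * (A ∩ B).ncard = A.ncard + B.ncard by omega]
    exact hA.2.add hB.2
  exact ⟨hfin, (Nat.even_add.mp key).mpr (even_two_mul _)⟩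

theorem image {f : α → β} (hA : IsEvenFinite A) (hf : Set.InjOn f A) : IsEvenFinite (f '' A) :=
  ⟨hA.1.image f, hf.ncard_image ▸ hA.2⟩

theorem image_iff {f : α → β} (hf : Function.Injective f) :
    IsEvenFinite (f '' A) ↔ IsEvenFinite A := by
  rw [IsEvenFinite, IsEvenFinite, Set.finite_image_iff hf.injOn,
    Set.ncard_image_of_injective A hf]

end IsEvenFinite

section OddPerm

variable {π σ : Equiv.Perm ℤ}

theorem Function.Odd.perm_inv (hσ : Function.Odd σ) : Function.Odd ⇑σ⁻¹ := fun i => by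
  rw [Equiv.Perm.inv_eq_iff_eq, hσ, Equiv.Perm.coe_inv, Equiv.apply_symm_apply]

theorem Function.Odd.abs_apply_abs (hσ : Function.Odd σ) (i : ℤ) : |σ (|i|)| = |σ i| := by
  rcases abs_choice i with h | h <;> rw [h]
  rw [hσ, abs_neg]

theorem negSet_mul (hπ : Function.Odd π) (hσ : Function.Odd σ) :
    negSet (π * σ) = negSet σ ∆ {i | 0 < i ∧ |σ i| ∈ negSet π} := by
  ext i
  simp only [negSet, Set.mem_ofPred_eq, Set.mem_symmDiff, Equiv.Perm.mul_apply]
  rcases lt_trichotomy (σ i) 0 with h | h | h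
  · have : π (σ i) ≠ 0 := fun h0 => h.ne (π.injective (h0.trans hπ.map_zero.symm))
    rw [abs_of_neg h, hπ]
    omega
  · have hi : i = 0 := σ.injective (h.trans hσ.map_zero.symm)
    omega
  · rw [abs_of_pos h]
    omega

theorem Function.Odd.leftInvOn_abs_apply {S : Set ℤ} (hσ : Function.Odd σ) (hS : S ⊆ Set.Ioi 0) :
    Set.LeftInvOn (fun i => |σ i|) (fun j => |σ⁻¹ j|) S := fun j hj => by
  show |σ (|σ⁻¹ j|)| = j
  rw [hσ.abs_apply_abs, Equiv.Perm.coe_inv, Equiv.apply_symm_apply, abs_of_pos (hS hj)]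

theorem Function.Odd.setOf_abs_apply_mem_eq_image {S : Set ℤ} (hσ : Function.Odd σ)
    (hS : S ⊆ Set.Ioi 0) :
    {i | 0 < i ∧ |σ i| ∈ S} = (fun j => |σ⁻¹ j|) '' S := by
  ext i
  constructor
  · rintro ⟨hi, hiS⟩
    refine ⟨|σ i|, hiS, ?_⟩
    show |σ⁻¹ (|σ i|)| = i
    rw [hσ.perm_inv.abs_apply_abs, Equiv.Perm.coe_inv, Equiv.symm_apply_apply, abs_of_pos hi]
  · rintro ⟨j, hj, rfl⟩
    have hj0 : σ⁻¹ j ≠ 0 := fun h0 =>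
      (hS hj).ne' (σ⁻¹.injective (h0.trans hσ.perm_inv.map_zero.symm))
    exact ⟨abs_pos.mpr hj0, Set.mem_of_eq_of_mem (hσ.leftInvOn_abs_apply hS hj) hj⟩

theorem negSet_inv (hπ : Function.Odd π) : negSet π⁻¹ = (fun j => -π j) '' negSet π := by
  ext i
  simp only [negSet, Set.mem_ofPred_eq, Set.mem_image]
  constructor
  · rintro ⟨hi, hneg⟩
    refine ⟨-π⁻¹ i, ⟨neg_pos.mpr hneg, ?_⟩, ?_⟩ <;>
      rw [hπ, Equiv.Perm.coe_inv, Equiv.apply_symm_apply]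
    · exact neg_neg_of_pos hi
    · exact neg_neg i
  · rintro ⟨j, ⟨hj, hjneg⟩, rfl⟩
    rw [hπ.perm_inv, Equiv.Perm.coe_inv, Equiv.symm_apply_apply]
    exact ⟨neg_pos.mpr hjneg, neg_neg_of_pos hj⟩

theorem IsEvenFinite.negSet_mul (hπ : Function.Odd π) (hσ : Function.Odd σ)
    (hπe : IsEvenFinite (negSet π)) (hσe : IsEvenFinite (negSet σ)) :
    IsEvenFinite (negSet (π * σ)) := by
  have hpos : negSet π ⊆ Set.Ioi 0 := fun _ h => h.1
  rw [_root_.negSet_mul hπ hσ, hσ.setOf_abs_apply_mem_eq_image hpos]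
  exact hσe.symmDiff (hπe.image (hσ.leftInvOn_abs_apply hpos).injOn)

theorem IsEvenFinite.negSet_inv (hπ : Function.Odd π) (hπe : IsEvenFinite (negSet π)) :
    IsEvenFinite (negSet π⁻¹) := by
  rw [_root_.negSet_inv hπ]
  exact hπe.image (neg_injective.comp π.injective).injOn

end OddPerm

def shiftConj (n : ℤ) : MulAut (Equiv.Perm ℤ) := MulAut.conj (Equiv.addRight n)⁻¹

theorem shiftConj_apply_apply (n : ℤ) (π : Equiv.Perm ℤ) (i : ℤ) :
    shiftConj n π i = π (i + n) - n := by
  simp [shiftConj, MulAut.conj_apply, Equiv.Perm.inv_def, sub_eq_add_neg]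

namespace IsAffineSigned

variable {n : ℤ} {π σ : Equiv.Perm ℤ}

theorem odd (h : IsAffineSigned n π) : Function.Odd π := h.2

theorem mul (hπ : IsAffineSigned n π) (hσ : IsAffineSigned n σ) : IsAffineSigned n (π * σ) :=
  ⟨fun i => by simp only [Equiv.Perm.mul_apply, hσ.1, hπ.1],
    fun i => by simp only [Equiv.Perm.mul_apply, hσ.2, hπ.2]⟩

theorem inv (h : IsAffineSigned n π) : IsAffineSigned n π⁻¹ :=
  ⟨fun i => by rw [Equiv.Perm.inv_eq_iff_eq, h.1, Equiv.Perm.coe_inv, Equiv.apply_symm_apply],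
    h.odd.perm_inv⟩

theorem apply_two_mul_sub (h : IsAffineSigned n π) (i : ℤ) : π (2 * n - i) = 2 * n - π i := by
  rw [sub_eq_neg_add, h.1, h.2]
  ring

theorem odd_shiftConj (h : IsAffineSigned n π) : Function.Odd (shiftConj n π) := fun i => by
  rw [shiftConj_apply_apply, shiftConj_apply_apply,
    show -i + n = 2 * n - (i + n) by ring, h.apply_two_mul_sub]
  ring

theorem bigSet_eq_image (h : IsAffineSigned n π) :
    bigSet n π = (fun j => n - j) '' negSet (shiftConj n π) := by
  ext i
  simp only [bigSet, negSet, Set.mem_ofPred_eq, Set.mem_image, shiftConj_apply_apply]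
  constructor
  · rintro ⟨hi, hbig⟩
    refine ⟨n - i, ⟨by omega, ?_⟩, by ring⟩
    rw [show n - i + n = 2 * n - i by ring, h.apply_two_mul_sub]
    omega
  · rintro ⟨j, ⟨hj, hjneg⟩, rfl⟩
    have := h.apply_two_mul_sub (j + n)
    rw [show 2 * n - (j + n) = n - j by ring] at this
    omega

end IsAffineSigned

theorem isDoublyEvenSigned_iff {n : ℤ} {π : Equiv.Perm ℤ} :
    IsDoublyEvenSigned n π ↔
      IsAffineSigned n π ∧ IsEvenFinite (negSet π) ∧ IsEvenFinite (negSet (shiftConj n π)) := by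
  have hbig (h : IsAffineSigned n π) :
      IsEvenFinite (bigSet n π) ↔ IsEvenFinite (negSet (shiftConj n π)) := by
    rw [h.bigSet_eq_image, IsEvenFinite.image_iff sub_right_injective]
  constructor
  · rintro ⟨ha, hnf, hbf, hne, hbe⟩
    exact ⟨ha, ⟨hnf, hne⟩, (hbig ha).mp ⟨hbf, hbe⟩⟩
  · rintro ⟨ha, ⟨hnf, hne⟩, hc⟩
    obtain ⟨hbf, hbe⟩ := (hbig ha).mpr hc
    exact ⟨ha, hnf, hbf, hne, hbe⟩

theorem doublyEvenSigned_closed_general (n : ℤ) (π σ : Equiv.Perm ℤ)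
    (hπ : IsDoublyEvenSigned n π) (hσ : IsDoublyEvenSigned n σ) :
    IsDoublyEvenSigned n (π * σ) ∧ IsDoublyEvenSigned n π⁻¹ := by
  simp only [isDoublyEvenSigned_iff] at hπ hσ ⊢
  obtain ⟨hπa, hπn, hπc⟩ := hπ
  obtain ⟨hσa, hσn, hσc⟩ := hσ
  refine ⟨⟨hπa.mul hσa, hπn.negSet_mul hπa.odd hσa.odd hσn, ?_⟩,
    ⟨hπa.inv, hπn.negSet_inv hπa.odd, ?_⟩⟩
  · rw [map_mul]
    exact hπc.negSet_mul hπa.odd_shiftConj hσa.odd_shiftConj hσc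
  · rw [map_inv]
    exact hπc.negSet_inv hπa.odd_shiftConj

/-- The affine doubly even-signed permutations are closed under composition and inverses. -/
theorem doublyEvenSigned_closed (n : ℤ) (hn : 2 ≤ n) (π σ : Equiv.Perm ℤ)
    (hπ : IsDoublyEvenSigned n π) (hσ : IsDoublyEvenSigned n σ) :
    IsDoublyEvenSigned n (π * σ) ∧ IsDoublyEvenSigned n π⁻¹ :=
  doublyEvenSigned_closed_general n π σ hπ hσ
end

section
/- For π an affine signed permutation and ℓ_a the loop permutation sending i to i+2n if i ≡ a (mod 2n), i to i-2n if i ≡ -a (mod 2n), and fixing all other integers (where a is an integer with a ≢ 0 mod n), the quantity #big(π∘ℓ_a) differs from #big(π) by exactly 1, and #neg(π∘ℓ_a) differs from #neg(π) by exactly 1. -/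
/-- The underlying function of the loop `ℓ_a`: sends `i ↦ i + 2n` if `i ≡ a (mod 2n)`,
`i ↦ i - 2n` if `i ≡ -a (mod 2n)`, and fixes all other integers. -/
def loopFun (n a i : ℤ) : ℤ :=
  if (2 * n) ∣ (i - a) then i + 2 * n
  else if (2 * n) ∣ (i + a) then i - 2 * n
  else i

/-!
On each residue class modulo `2n` an affine signed permutation is a translation, and right
multiplication by `ℓ_b` changes that translation by `+2n` on the class of `b` and by `-2n` on the
class of `-b`. If `x ≡ b` is the unique element with `π x ∈ (-2n, 0)`, the only integers whose
membership in `negSet` changes are `x` and `-x`, and only the positive one counts: `negSet` changes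
by the single element `|x|`. Conjugating by the reflection `i ↦ n - i` turns `bigSet n π` into the
`negSet` of another affine signed permutation and `ℓ_a` into `ℓ_(a+n)`, so `#big` reduces to
`#neg`.
-/

theorem Set.abs_ncard_symmDiff_singleton_sub_ncard {α : Type*} {s : Set α}
    (hs : s.Finite) (y : α) : |((symmDiff s {y}).ncard : ℤ) - s.ncard| = 1 := by
  by_cases hy : y ∈ s
  · have h : symmDiff s {y} = s \ {y} := by
      ext x; by_cases hx : x = y <;> simp [Set.mem_symmDiff, hx, hy]
    rw [h, Set.ncard_sdiff_singleton_of_mem hy, Nat.cast_sub ((Set.ncard_pos hs).2 ⟨y, hy⟩)]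
    simp
  · have h : symmDiff s {y} = insert y s := by
      ext x; by_cases hx : x = y <;> simp [Set.mem_symmDiff, hx, hy]
    rw [h, Set.ncard_insert_of_notMem hy hs]
    simp

section Loop

variable {n b i : ℤ}

theorem not_dvd_add_of_dvd_sub (hb : ¬ n ∣ b) (h : 2 * n ∣ i - b) : ¬ 2 * n ∣ i + b := by
  intro h'
  have h2b : 2 * n ∣ 2 * b := by simpa [two_mul] using dvd_sub h' h
  exact hb ((mul_dvd_mul_iff_left two_ne_zero).1 h2b)

theorem loopFun_of_dvd_sub (h : 2 * n ∣ i - b) : loopFun n b i = i + 2 * n := if_pos h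

theorem loopFun_of_dvd_add (hb : ¬ n ∣ b) (h : 2 * n ∣ i + b) : loopFun n b i = i - 2 * n := by
  rw [loopFun, if_neg fun h' => not_dvd_add_of_dvd_sub hb h' h, if_pos h]

theorem loopFun_of_not_dvd (h₁ : ¬ 2 * n ∣ i - b) (h₂ : ¬ 2 * n ∣ i + b) : loopFun n b i = i := by
  rw [loopFun, if_neg h₁, if_neg h₂]

theorem sub_loopFun_sub (hb : ¬ n ∣ b) (j : ℤ) :
    n - loopFun n b (n - j) = loopFun n (b + n) j := by
  by_cases h₁ : 2 * n ∣ n - j - b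
  · have h : 2 * n ∣ j + (b + n) := by
      rw [show j + (b + n) = 2 * n - (n - j - b) by ring]; exact dvd_sub (dvd_refl _) h₁
    rw [loopFun_of_dvd_sub h₁, loopFun_of_dvd_add (dvd_add_self_right.not.2 hb) h]; ring
  by_cases h₂ : 2 * n ∣ n - j + b
  · have h : 2 * n ∣ j - (b + n) := by
      rw [show j - (b + n) = -(n - j + b) by ring]; exact h₂.neg_right
    rw [loopFun_of_dvd_add hb h₂, loopFun_of_dvd_sub h]; ring
  · have h₁' : ¬ 2 * n ∣ j - (b + n) := by
      rw [show j - (b + n) = -(n - j + b) by ring, dvd_neg]; exact h₂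
    have h₂' : ¬ 2 * n ∣ j + (b + n) := by
      rw [show j + (b + n) = 2 * n - (n - j - b) by ring, dvd_sub_right (dvd_refl _)]; exact h₁
    rw [loopFun_of_not_dvd h₁ h₂, loopFun_of_not_dvd h₁' h₂']; ring

end Loop

namespace IsAffineSigned

variable {n : ℤ} {π : Equiv.Perm ℤ}

theorem periodic_sub (hπ : IsAffineSigned n π) : Function.Periodic (fun i => π i - i) (2 * n) :=
  fun i => by simp only [hπ.1 i]; ring

theorem apply_eq_of_dvd_sub (hπ : IsAffineSigned n π) {i j : ℤ} (h : 2 * n ∣ i - j) :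
    π i = π j + (i - j) := by
  obtain ⟨k, hk⟩ := h
  have := hπ.periodic_sub.int_mul k j
  rw [Int.cast_id, show j + k * (2 * n) = i by linarith] at this
  linarith

theorem eq_of_dvd_sub (hπ : IsAffineSigned n π) {i j : ℤ} (h : 2 * n ∣ i - j)
    (hlt : |π i - π j| < 2 * n) : i = j := by
  have := hπ.apply_eq_of_dvd_sub h
  have := Int.eq_zero_of_abs_lt_dvd h (by rwa [show i - j = π i - π j by linarith])
  linarith

theorem apply_sub_two_mul (hπ : IsAffineSigned n π) (i : ℤ) : π (i - 2 * n) = π i - 2 * n := by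
  rw [hπ.apply_eq_of_dvd_sub (j := i) ⟨-1, by ring⟩]; ring

theorem apply_zero (hπ : IsAffineSigned n π) : π 0 = 0 := by
  have := hπ.2 0
  rw [neg_zero] at this
  linarith

theorem dvd_of_dvd_apply (hπ : IsAffineSigned n π) {i : ℤ} (h : 2 * n ∣ π i) : 2 * n ∣ i := by
  obtain ⟨k, hk⟩ := h
  have : π (2 * n * k) = π i := by
    rw [hπ.apply_eq_of_dvd_sub (j := 0) (by simp), hπ.apply_zero, hk]; ring
  rw [← π.injective this]; exact dvd_mul_right _ _

theorem exists_dvd_sub_and_apply_mem_Ioo (hn : 0 < n) (hπ : IsAffineSigned n π) {b : ℤ}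
    (hb : ¬ 2 * n ∣ b) : ∃ x, 2 * n ∣ x - b ∧ -(2 * n) < π x ∧ π x < 0 := by
  have hr : 0 < π b % (2 * n) :=
    (Int.emod_pos_of_not_dvd (mt hπ.dvd_of_dvd_apply hb)).resolve_left (by omega)
  have hr' : π b % (2 * n) < 2 * n := Int.emod_lt_of_pos _ (by omega)
  rw [Int.emod_def] at hr hr'
  have hd : 2 * n ∣ (b - 2 * n * (π b / (2 * n) + 1)) - b := ⟨-(π b / (2 * n) + 1), by ring⟩
  refine ⟨_, hd, ?_⟩
  rw [hπ.apply_eq_of_dvd_sub hd]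
  constructor <;> linarith

theorem bddBelow_range_sub (hn : 0 < n) (hπ : IsAffineSigned n π) :
    BddBelow (Set.range fun i => π i - i) := by
  refine ((Set.finite_Ico 0 (2 * n)).image fun i => π i - i).bddBelow.mono ?_
  rintro _ ⟨i, rfl⟩
  obtain ⟨j, hj, hij⟩ := hπ.periodic_sub.exists_mem_Ico₀ (by omega) i
  exact ⟨j, hj, hij.symm⟩

theorem negSet_finite (hn : 0 < n) (hπ : IsAffineSigned n π) : (negSet π).Finite := by
  obtain ⟨m, hm⟩ := hπ.bddBelow_range_sub hn
  refine (Set.finite_Ioo 0 (-m)).subset fun i ⟨hi, hπi⟩ => ⟨hi, ?_⟩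
  have : m ≤ π i - i := hm ⟨i, rfl⟩
  linarith

theorem permCongr_subLeft (hπ : IsAffineSigned n π) :
    IsAffineSigned n ((Equiv.subLeft n).permCongr π) := by
  refine ⟨fun i => ?_, fun i => ?_⟩ <;>
    simp only [Equiv.permCongr_apply, Equiv.subLeft_apply, Equiv.subLeft_symm_apply,
      neg_add_eq_sub, sub_neg_eq_add]
  · rw [show n - (i + 2 * n) = n - i - 2 * n by ring, hπ.apply_sub_two_mul]; ring
  · rw [hπ.apply_eq_of_dvd_sub (i := n + i) (j := i - n) ⟨1, by ring⟩, ← neg_sub n i, hπ.2]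
    ring

end IsAffineSigned

theorem negSet_permCongr_subLeft (n : ℤ) (π : Equiv.Perm ℤ) :
    negSet ((Equiv.subLeft n).permCongr π) = Equiv.subLeft n ⁻¹' bigSet n π := by
  ext i
  simp only [negSet, bigSet, Set.mem_ofPred_eq, Set.mem_preimage, Equiv.permCongr_apply,
    Equiv.subLeft_apply, Equiv.subLeft_symm_apply, neg_add_eq_sub]
  constructor <;> rintro ⟨h₁, h₂⟩ <;> constructor <;> linarith

theorem ncard_bigSet_eq_ncard_negSet_permCongr (n : ℤ) (π : Equiv.Perm ℤ) :
    (bigSet n π).ncard = (negSet ((Equiv.subLeft n).permCongr π)).ncard := by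
  rw [negSet_permCongr_subLeft,
    Set.ncard_preimage_of_injective_subset_range (Equiv.injective _) (by simp)]

section NegSet

variable {n b : ℤ} {π σ : Equiv.Perm ℤ}

theorem negSet_eq_symmDiff_of_loop (hb : ¬ n ∣ b) (hπ : IsAffineSigned n π)
    (hσ : ∀ i, σ i = π (loopFun n b i)) {x : ℤ} (hxb : 2 * n ∣ x - b)
    (hx : -(2 * n) < π x ∧ π x < 0) :
    negSet σ = symmDiff (negSet π) {|x|} := by
  have huniq : ∀ i, 2 * n ∣ i - b → -(2 * n) ≤ π i ∧ π i ≤ 0 → i = x := fun i hi h =>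
    hπ.eq_of_dvd_sub (by simpa using dvd_sub hi hxb) (abs_sub_lt_iff.2 ⟨by omega, by omega⟩)
  have hx₀ : x ≠ 0 := by rintro rfl; rw [hπ.apply_zero] at hx; omega
  have habs : ∀ i, i = |x| ↔ 0 < i ∧ (i = x ∨ i = -x) := by
    intro i; rcases le_or_gt 0 x with h | h
    · rw [abs_of_nonneg h]; omega
    · rw [abs_of_neg h]; omega
  ext i
  simp only [Set.mem_symmDiff, Set.mem_singleton_iff, habs, negSet, Set.mem_ofPred_eq, hσ]
  by_cases hA : 2 * n ∣ i - b
  · have hix' : i ≠ -x := by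
      rintro rfl
      exact not_dvd_add_of_dvd_sub hb hA (by simpa [neg_add_eq_sub] using hxb.neg_right)
    rw [loopFun_of_dvd_sub hA, hπ.1]
    by_cases hix : i = x
    · subst hix; omega
    · have := mt (huniq i hA) hix; omega
  by_cases hB : 2 * n ∣ i + b
  · have hix : i ≠ x := by rintro rfl; exact not_dvd_add_of_dvd_sub hb hxb hB
    rw [loopFun_of_dvd_add hb hB, hπ.apply_sub_two_mul]
    by_cases hix' : i = -x
    · subst hix'; rw [hπ.2]; omega
    · have := mt (huniq (-i) (by simpa [neg_add_eq_sub] using hB.neg_right)) (by omega)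
      rw [hπ.2] at this; omega
  · have : i ≠ x := by rintro rfl; exact hA hxb
    have : i ≠ -x := by
      rintro rfl; exact hB (by simpa [neg_add_eq_sub] using hxb.neg_right)
    rw [loopFun_of_not_dvd hA hB]; omega

theorem abs_ncard_negSet_sub_of_loop (hn : 0 < n) (hb : ¬ n ∣ b) (hπ : IsAffineSigned n π)
    (hσ : ∀ i, σ i = π (loopFun n b i)) :
    |((negSet σ).ncard : ℤ) - (negSet π).ncard| = 1 := by
  obtain ⟨x, hxb, hx⟩ :=
    hπ.exists_dvd_sub_and_apply_mem_Ioo hn fun h => hb (dvd_trans (dvd_mul_left n 2) h)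
  rw [negSet_eq_symmDiff_of_loop hb hπ hσ hxb hx]
  exact Set.abs_ncard_symmDiff_singleton_sub_ncard (hπ.negSet_finite hn) _

end NegSet

/-- Multiplying an affine signed permutation on the right by a loop `ℓ_a` changes
both `#big` and `#neg` by exactly one. -/
theorem loop_changes_big_neg_by_one (n a : ℤ) (hn : 2 ≤ n) (ha0 : 0 < a) (han : a < n)
    (π ℓ : Equiv.Perm ℤ) (hπ : IsAffineSigned n π) (hℓ : ∀ i, ℓ i = loopFun n a i) :
    |((bigSet n (π * ℓ)).ncard : ℤ) - ((bigSet n π).ncard : ℤ)| = 1 ∧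
    |((negSet (π * ℓ)).ncard : ℤ) - ((negSet π).ncard : ℤ)| = 1 := by
  have hn₀ : 0 < n := by omega
  have ha : ¬ n ∣ a := fun h => by have := Int.le_of_dvd ha0 h; omega
  have hσ : ∀ i, (π * ℓ) i = π (loopFun n a i) := fun i => by rw [Equiv.Perm.mul_apply, hℓ]
  refine ⟨?_, abs_ncard_negSet_sub_of_loop hn₀ ha hπ hσ⟩
  rw [ncard_bigSet_eq_ncard_negSet_permCongr, ncard_bigSet_eq_ncard_negSet_permCongr]
  refine abs_ncard_negSet_sub_of_loop hn₀ (dvd_add_self_right.not.2 ha) hπ.permCongr_subLeft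
    fun j => ?_
  simp only [Equiv.permCongr_apply, Equiv.subLeft_apply, Equiv.subLeft_symm_apply, neg_add_eq_sub,
    hσ, ← sub_loopFun_sub ha, sub_sub_cancel]
end

section
/- The loop permutation ℓ_a is an affine jointly even-signed permutation: #neg(ℓ_a) + #big(ℓ_a) is even. -/
/-- The loop `ℓ_a` is an affine jointly even-signed permutation:
`#neg(ℓ_a)` + `#big(ℓ_a)` is even. -/
theorem loop_is_jointly_even_signed (n a : ℤ) (hn : 2 ≤ n) (ha0 : 0 < a) (han : a < n)
    (ℓ : Equiv.Perm ℤ) (hℓ : ∀ i, ℓ i = loopFun n a i) :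
    IsAffineSigned n ℓ ∧ Even ((negSet ℓ).ncard + (bigSet n ℓ).ncard) := by
  have h2n : (0:ℤ) < 2 * n := by linarith
  have hnd : ¬ (2 * n) ∣ (2 * a) := by
    intro h
    have := Int.le_of_dvd (by linarith) h
    linarith
  constructor
  · constructor
    · intro i
      have h1 : (2 * n) ∣ (i + 2 * n - a) ↔ (2 * n) ∣ (i - a) := by
        rw [show i + 2 * n - a = 2 * n + (i - a) by ring]
        exact dvd_add_right (dvd_refl _)
      have h2 : (2 * n) ∣ (i + 2 * n + a) ↔ (2 * n) ∣ (i + a) := by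
        rw [show i + 2 * n + a = 2 * n + (i + a) by ring]
        exact dvd_add_right (dvd_refl _)
      simp only [hℓ, loopFun, h1, h2]
      split_ifs <;> ring
    · intro i
      have h3 : (2 * n) ∣ (-i - a) ↔ (2 * n) ∣ (i + a) := by
        rw [show -i - a = -(i + a) by ring, dvd_neg]
      have h4 : (2 * n) ∣ (-i + a) ↔ (2 * n) ∣ (i - a) := by
        rw [show -i + a = -(i - a) by ring, dvd_neg]
      simp only [hℓ, loopFun, h3, h4]
      rcases em ((2 * n) ∣ (i + a)) with hp | hp <;>
        rcases em ((2 * n) ∣ (i - a)) with hq | hq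
      · exfalso
        apply hnd
        have := dvd_sub hp hq
        rwa [show i + a - (i - a) = 2 * a by ring] at this
      · simp only [hp, hq, if_true, if_false]
        ring
      · simp only [hp, hq, if_true, if_false]
        ring
      · simp only [hp, hq, if_false]
  · have hneg : negSet ℓ = {2 * n - a} := by
      ext i
      simp only [negSet, Set.mem_setOf_eq, Set.mem_singleton_iff, hℓ, loopFun]
      rcases em ((2 * n) ∣ (i - a)) with hA | hA
      · simp only [hA, if_true]
        constructor
        · rintro ⟨h1, h2⟩; linarith
        · rintro rfl
          exfalso
          apply hnd
          have := dvd_sub (dvd_refl (2 * n)) hA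
          rwa [show 2 * n - (2 * n - a - a) = 2 * a by ring] at this
      · rcases em ((2 * n) ∣ (i + a)) with hB | hB
        · simp only [hA, hB, if_true, if_false]
          obtain ⟨k, hk⟩ := hB
          constructor
          · rintro ⟨h1, h2⟩
            have hk0 : 0 < k := by
              by_contra h
              push_neg at h
              nlinarith [mul_le_mul_of_nonneg_left h (by linarith : (0:ℤ) ≤ 2 * n)]
            have hk2 : k < 2 := by
              by_contra h
              push_neg at h
              nlinarith [mul_le_mul_of_nonneg_left h (by linarith : (0:ℤ) ≤ 2 * n)]
            have : k = 1 := by omega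
            subst this
            linarith
          · rintro rfl
            constructor <;> linarith
        · simp only [hA, hB, if_false]
          constructor
          · rintro ⟨h1, h2⟩; linarith
          · rintro rfl
            exact absurd ⟨1, by ring⟩ hB
    have hbig : bigSet n ℓ = {a} := by
      ext i
      simp only [bigSet, Set.mem_setOf_eq, Set.mem_singleton_iff, hℓ, loopFun]
      rcases em ((2 * n) ∣ (i - a)) with hA | hA
      · simp only [hA, if_true]
        obtain ⟨k, hk⟩ := hA
        constructor
        · rintro ⟨h1, h2⟩
          have hk0 : 0 ≤ k := by
            by_contra h
            push_neg at h
            have h' : k ≤ -1 := by omega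
            nlinarith [mul_le_mul_of_nonneg_left h' (by linarith : (0:ℤ) ≤ 2 * n)]
          have hk2 : k < 1 := by
            by_contra h
            push_neg at h
            nlinarith [mul_le_mul_of_nonneg_left h (by linarith : (0:ℤ) ≤ 2 * n)]
          have : k = 0 := by omega
          subst this
          linarith
        · rintro rfl
          constructor <;> linarith
      · rcases em ((2 * n) ∣ (i + a)) with hB | hB
        · simp only [hA, hB, if_true, if_false]
          constructor
          · rintro ⟨h1, h2⟩; linarith
          · rintro rfl
            exfalso
            apply hnd
            rwa [show i + i = 2 * i by ring] at hB
        · simp only [hA, hB, if_false]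
          constructor
          · rintro ⟨h1, h2⟩; linarith
          · rintro rfl
            exact absurd ⟨0, by ring⟩ hA
    rw [hneg, hbig, Set.ncard_singleton, Set.ncard_singleton]
    decide
end

section
/- For the Coxeter element c = s₀s₁⋯s_{n-1} of affine type D_{n-1}, realized as an affine signed permutation, the translation subgroup elements lying in the interval [1,c] of reflection length 2 factor as a product of two loops: each such translation equals ℓ_a · ℓ_b⁻¹ where ℓ_a(i)=i+2n for i ≡ a mod 2n, ℓ_a(i)=i-2n for i ≡ -a mod 2n, fixing others; explicitly, the product ((a,b))_{2n} · ((a, b+2n))_{2n} of two reflections equals ℓ_a · ℓ_b⁻¹ whenever a ≢ ±b mod 2n. -/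
/-- The underlying function of the reflection `((a,b))_{2n}`. -/
def reflFun (n a b i : ℤ) : ℤ :=
  if (2 * n) ∣ (i - a) then i - a + b
  else if (2 * n) ∣ (i - b) then i - b + a
  else if (2 * n) ∣ (i + a) then i + a - b
  else if (2 * n) ∣ (i + b) then i + b - a
  else i

/-- For `a ≢ ±b (mod 2n)`, the product of the two reflections `((a,b))_{2n}` and
`((a, b+2n))_{2n}` (a translation in the interval `[1,c]`) factors as the product
of two loops: it equals `ℓ_a · ℓ_b⁻¹`. -/
theorem translation_factors_as_loops (n a b : ℤ) (hn : 5 ≤ n)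
    (ha : ¬ (n ∣ a)) (hb : ¬ (n ∣ b))
    (hab : ¬ ((2 * n) ∣ (a - b))) (hab' : ¬ ((2 * n) ∣ (a + b)))
    (r₁ r₂ la lb : Equiv.Perm ℤ)
    (hr₁ : ∀ i : ℤ, r₁ i = reflFun n a b i)
    (hr₂ : ∀ i : ℤ, r₂ i = reflFun n a (b + 2 * n) i)
    (hla : ∀ i : ℤ, la i = loopFun n a i)
    (hlb : ∀ i : ℤ, lb i = loopFun n b i) :
    r₁ * r₂ = la * lb⁻¹ := by
  have key : ∀ i : ℤ, r₁ (r₂ (lb i)) = la i := by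
    intro i
    rw [hlb, hr₂, hr₁, hla]
    by_cases h1 : (2 * n) ∣ (i - b)
    · obtain ⟨k, hk⟩ := h1
      have e1 : loopFun n b i = i + 2 * n := by
        unfold loopFun; rw [if_pos ⟨k, hk⟩]
      have c1 : ¬ (2 * n) ∣ (i + 2 * n - a) := by
        rintro ⟨m, hm⟩; exact hab ⟨k - m + 1, by linarith⟩
      have c2 : (2 * n) ∣ (i + 2 * n - (b + 2 * n)) := ⟨k, by linarith⟩
      have e2 : reflFun n a (b + 2 * n) (i + 2 * n) = i - b + a := by
        unfold reflFun; rw [if_neg c1, if_pos c2]; ring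
      have c3 : (2 * n) ∣ (i - b + a - a) := ⟨k, by linarith⟩
      have e3 : reflFun n a b (i - b + a) = i := by
        unfold reflFun; rw [if_pos c3]; ring
      have f1 : ¬ (2 * n) ∣ (i - a) := by
        rintro ⟨m, hm⟩; exact hab ⟨k - m, by linarith⟩
      have f2 : ¬ (2 * n) ∣ (i + a) := by
        rintro ⟨m, hm⟩; exact hab' ⟨m - k, by linarith⟩
      have e4 : loopFun n a i = i := by
        unfold loopFun; rw [if_neg f1, if_neg f2]
      rw [e1, e2, e3, e4]
    · by_cases h2 : (2 * n) ∣ (i + b)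
      · obtain ⟨k, hk⟩ := h2
        have e1 : loopFun n b i = i - 2 * n := by
          unfold loopFun; rw [if_neg h1, if_pos ⟨k, hk⟩]
        have c1 : ¬ (2 * n) ∣ (i - 2 * n - a) := by
          rintro ⟨m, hm⟩; exact hab' ⟨k - m - 1, by linarith⟩
        have c2 : ¬ (2 * n) ∣ (i - 2 * n - (b + 2 * n)) := by
          rintro ⟨m, hm⟩; exact hb ⟨k - m - 2, by linarith⟩
        have c3 : ¬ (2 * n) ∣ (i - 2 * n + a) := by
          rintro ⟨m, hm⟩; exact hab ⟨m + 1 - k, by linarith⟩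
        have c4 : (2 * n) ∣ (i - 2 * n + (b + 2 * n)) := ⟨k, by linarith⟩
        have e2 : reflFun n a (b + 2 * n) (i - 2 * n) = i + b - a := by
          unfold reflFun; rw [if_neg c1, if_neg c2, if_neg c3, if_pos c4]; ring
        have d1 : ¬ (2 * n) ∣ (i + b - a - a) := by
          rintro ⟨m, hm⟩; exact ha ⟨k - m, by linarith⟩
        have d2 : ¬ (2 * n) ∣ (i + b - a - b) := by
          rintro ⟨m, hm⟩; exact hab' ⟨k - m, by linarith⟩
        have d3 : (2 * n) ∣ (i + b - a + a) := ⟨k, by linarith⟩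
        have e3 : reflFun n a b (i + b - a) = i := by
          unfold reflFun; rw [if_neg d1, if_neg d2, if_pos d3]; ring
        have f1 : ¬ (2 * n) ∣ (i - a) := by
          rintro ⟨m, hm⟩; exact hab' ⟨k - m, by linarith⟩
        have f2 : ¬ (2 * n) ∣ (i + a) := by
          rintro ⟨m, hm⟩; exact hab ⟨m - k, by linarith⟩
        have e4 : loopFun n a i = i := by
          unfold loopFun; rw [if_neg f1, if_neg f2]
        rw [e1, e2, e3, e4]
      · by_cases h3 : (2 * n) ∣ (i - a)
        · obtain ⟨k, hk⟩ := h3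
          have e1 : loopFun n b i = i := by
            unfold loopFun; rw [if_neg h1, if_neg h2]
          have e2 : reflFun n a (b + 2 * n) i = i - a + (b + 2 * n) := by
            unfold reflFun; rw [if_pos ⟨k, hk⟩]
          have c1 : ¬ (2 * n) ∣ (i - a + (b + 2 * n) - a) := by
            rintro ⟨m, hm⟩; exact hab ⟨k - m + 1, by linarith⟩
          have c2 : (2 * n) ∣ (i - a + (b + 2 * n) - b) := ⟨k + 1, by linarith⟩
          have e3 : reflFun n a b (i - a + (b + 2 * n)) = i + 2 * n := by
            unfold reflFun; rw [if_neg c1, if_pos c2]; ring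
          have e4 : loopFun n a i = i + 2 * n := by
            unfold loopFun; rw [if_pos ⟨k, hk⟩]
          rw [e1, e2, e3, e4]
        · by_cases h4 : (2 * n) ∣ (i + a)
          · obtain ⟨k, hk⟩ := h4
            have e1 : loopFun n b i = i := by
              unfold loopFun; rw [if_neg h1, if_neg h2]
            have c2 : ¬ (2 * n) ∣ (i - (b + 2 * n)) := by
              rintro ⟨m, hm⟩; exact hab' ⟨k - m - 1, by linarith⟩
            have e2 : reflFun n a (b + 2 * n) i = i + a - (b + 2 * n) := by
              unfold reflFun; rw [if_neg h3, if_neg c2, if_pos ⟨k, hk⟩]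
            have d1 : ¬ (2 * n) ∣ (i + a - (b + 2 * n) - a) := by
              rintro ⟨m, hm⟩; exact hab' ⟨k - m - 1, by linarith⟩
            have d2 : ¬ (2 * n) ∣ (i + a - (b + 2 * n) - b) := by
              rintro ⟨m, hm⟩; exact hb ⟨k - m - 1, by linarith⟩
            have d3 : ¬ (2 * n) ∣ (i + a - (b + 2 * n) + a) := by
              rintro ⟨m, hm⟩; exact hab ⟨m - k + 1, by linarith⟩
            have d4 : (2 * n) ∣ (i + a - (b + 2 * n) + b) := ⟨k - 1, by linarith⟩
            have e3 : reflFun n a b (i + a - (b + 2 * n)) = i - 2 * n := by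
              unfold reflFun; rw [if_neg d1, if_neg d2, if_neg d3, if_pos d4]; ring
            have e4 : loopFun n a i = i - 2 * n := by
              unfold loopFun; rw [if_neg h3, if_pos ⟨k, hk⟩]
            rw [e1, e2, e3, e4]
          · have e1 : loopFun n b i = i := by
              unfold loopFun; rw [if_neg h1, if_neg h2]
            have c2 : ¬ (2 * n) ∣ (i - (b + 2 * n)) := by
              rintro ⟨m, hm⟩; exact h1 ⟨m + 1, by linarith⟩
            have c4 : ¬ (2 * n) ∣ (i + (b + 2 * n)) := by
              rintro ⟨m, hm⟩; exact h2 ⟨m - 1, by linarith⟩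
            have e2 : reflFun n a (b + 2 * n) i = i := by
              unfold reflFun; rw [if_neg h3, if_neg c2, if_neg h4, if_neg c4]
            have e3 : reflFun n a b i = i := by
              unfold reflFun; rw [if_neg h3, if_neg h1, if_neg h4, if_neg h2]
            have e4 : loopFun n a i = i := by
              unfold loopFun; rw [if_neg h3, if_neg h4]
            rw [e1, e2, e3, e4]
  have hcomp : (r₁ * r₂) * lb = la := by
    ext i
    simp only [Equiv.Perm.mul_apply]
    exact key i
  exact eq_mul_inv_of_mul_eq hcomp
end
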